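/- Let ε > 0 and let N ≥ 1 be an integer. There exists a constant C_ε > 0, depending only on ε, such that for any two strictly ordered particle solutions x and y on [0,∞) one has, for all t ≥ 0, ‖x(t) − y(t)‖_N ≤ e^{C_ε t}·‖x(0) − y(0)‖_N, where ‖v‖_N = ( (1/N)·Σ_{i=0}^{N} v_i² )^{1/2} for v ∈ ℝ^{N+1}. -/

import Mathlib

open MeasureTheory Real Set
open scoped ENNReal

/-- Scaled Morse potential `W_ε(x) = (1/(2ε)) e^{-|x|/ε}`. -/
noncomputable def Morse (ε x : ℝ) : ℝ := (1 / (2 * ε)) * Real.exp (-|x| / ε)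

/-- Derivative of the scaled Morse potential,
`W_ε'(x) = -(1/(2ε²)) sign(x) e^{-|x|/ε}`. -/
noncomputable def Morse' (ε x : ℝ) : ℝ :=
  -(1 / (2 * ε ^ 2)) * Real.sign x * Real.exp (-|x| / ε)

/-- Right-hand side of the particle ODE system:
`(1/N) ∑_{k=0}^{N-1} (W_ε(x_{k+1}-x_i) - W_ε(x_k-x_i))/(x_{k+1}-x_k)`. -/
noncomputable def particleRHS (ε : ℝ) (N : ℕ) (x : ℕ → ℝ) (i : ℕ) : ℝ :=
  (1 / (N : ℝ)) * ∑ k ∈ Finset.range N,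
    (Morse ε (x (k + 1) - x i) - Morse ε (x k - x i)) / (x (k + 1) - x k)

/-- A strictly ordered particle solution on `[0,∞)`:  a differentiable curve
`x = (x_0,…,x_N)` with `x_0(t) < ⋯ < x_N(t)` for all `t ≥ 0`, solving the particle ODE. -/
def IsParticleSol (ε : ℝ) (N : ℕ) (x : ℝ → ℕ → ℝ) : Prop :=
  (∀ t : ℝ, 0 ≤ t → ∀ i < N, x t i < x t (i + 1)) ∧
  (∀ i ≤ N, ∀ t : ℝ, 0 ≤ t →
    HasDerivWithinAt (fun s => x s i) (particleRHS ε N (x t) i) (Set.Ici 0) t)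

/-- The discrete (piecewise constant) density
`ρ^N(y,t) = ∑_{k=0}^{N-1} R_k(t) 1_{[x_k(t), x_{k+1}(t))}(y)` with `R_k = 1/(N d_k)`. -/
noncomputable def discDens (N : ℕ) (x : ℝ → ℕ → ℝ) (y t : ℝ) : ℝ :=
  ∑ k ∈ Finset.range N,
    Set.indicator (Set.Ico (x t k) (x t (k + 1)))
      (fun _ => 1 / ((N : ℝ) * (x t (k + 1) - x t k))) y

/-- Convolution in the space variable: `(W ∗ ρ)(x) = ∫ W(x-y) ρ(y) dy`. -/
noncomputable def conv (W ρ : ℝ → ℝ) (x : ℝ) : ℝ := ∫ y, W (x - y) * ρ y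

/-- The scaled Euclidean norm `‖v‖_N = ((1/N) ∑_{i=0}^{N} v_i²)^{1/2}` on `ℝ^{N+1}`. -/
noncomputable def scaledNorm (N : ℕ) (v : ℕ → ℝ) : ℝ :=
  Real.sqrt ((1 / (N : ℝ)) * ∑ i ∈ Finset.range (N + 1), (v i) ^ 2)

/-!
On each side of the origin the Morse potential is an exponential whose derivative is
`1 / (2 ε³)`-Lipschitz, so its difference quotients are Lipschitz in the endpoints. Because the
particles stay ordered, every difference quotient in the velocity of particle `i` is taken between
two particles on the same side of it, which makes the velocity field Lipschitz: with `e = x - y`,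
`|ẋ_i - ẏ_i| ≤ ε⁻³ (mean |e| + |e_i|)`. Cauchy–Schwarz then gives
`d/dt ∑ e_i² ≤ (6 / ε³) ∑ e_i²`, and Grönwall's inequality yields the claim with `C_ε = 3 / ε³`.
-/

open scoped NNReal

theorem abs_slope_sub_slope_le {f f' : ℝ → ℝ} {s : Set ℝ} {K : ℝ≥0} (hs : Convex ℝ s)
    (hf : ∀ x ∈ s, HasDerivAt f (f' x) x) (hf' : LipschitzOnWith K f' s)
    {a b a' b' : ℝ} (ha : a ∈ s) (hb : b ∈ s) (ha' : a' ∈ s) (hb' : b' ∈ s)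
    (hab : a ≠ b) (hab' : a' ≠ b') :
    |slope f a b - slope f a' b'| ≤ K * (|a - a'| + |b - b'|) := by
  -- Each slope is the increment over `[0, 1]` of `τ ↦ f (a + τ (b - a)) / (b - a)`.
  set g : ℝ → ℝ := fun τ => f (a + τ * (b - a)) / (b - a) - f (a' + τ * (b' - a')) / (b' - a')
  have hg : g 1 - g 0 = slope f a b - slope f a' b' := by
    simp only [g, slope_def_field]
    ring_nf
  have hmem : ∀ {p q : ℝ}, p ∈ s → q ∈ s → ∀ τ ∈ Icc (0 : ℝ) 1, p + τ * (q - p) ∈ s :=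
    fun hp hq _ hτ => hs.add_smul_sub_mem hp hq hτ
  have hpath : ∀ {p q : ℝ}, p ∈ s → q ∈ s → p ≠ q → ∀ τ ∈ Icc (0 : ℝ) 1,
      HasDerivAt (fun τ => f (p + τ * (q - p)) / (q - p)) (f' (p + τ * (q - p))) τ := by
    intro p q hp hq hpq τ hτ
    have hlin : HasDerivAt (fun τ : ℝ => p + τ * (q - p)) (q - p) τ := by
      simpa using ((hasDerivAt_id τ).mul_const (q - p)).const_add p
    refine (((hf _ (hmem hp hq τ hτ)).comp τ hlin).div_const (q - p)).congr_deriv ?_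
    field_simp [sub_ne_zero.2 hpq.symm]
  have hbound : ∀ τ ∈ Ico (0 : ℝ) 1,
      ‖f' (a + τ * (b - a)) - f' (a' + τ * (b' - a'))‖ ≤ K * (|a - a'| + |b - b'|) := by
    intro τ hτ
    have hτ' : τ ∈ Icc (0 : ℝ) 1 := Ico_subset_Icc_self hτ
    calc ‖f' (a + τ * (b - a)) - f' (a' + τ * (b' - a'))‖
        ≤ K * |(a + τ * (b - a)) - (a' + τ * (b' - a'))| :=
          hf'.dist_le_mul _ (hmem ha hb τ hτ') _ (hmem ha' hb' τ hτ')
      _ = K * |(1 - τ) * (a - a') + τ * (b - b')| := by ring_nf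
      _ ≤ K * (|a - a'| + |b - b'|) := by
          gcongr
          refine (abs_add_le _ _).trans ?_
          rw [abs_mul, abs_mul, abs_of_nonneg (sub_nonneg.2 hτ.2.le), abs_of_nonneg hτ.1]
          nlinarith [abs_nonneg (a - a'), abs_nonneg (b - b'), hτ.1, hτ.2]
  rw [← hg, ← Real.norm_eq_abs]
  exact norm_image_sub_le_of_norm_deriv_le_segment_01'
    (fun τ hτ => ((hpath ha hb hab τ hτ).sub (hpath ha' hb' hab' τ hτ)).hasDerivWithinAt) hbound

theorem abs_exp_sub_exp_le_of_nonpos {x y : ℝ} (hx : x ≤ 0) (hy : y ≤ 0) :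
    |exp x - exp y| ≤ |x - y| := by
  wlog hxy : x ≤ y generalizing x y
  · rw [abs_sub_comm, abs_sub_comm x]
    exact this hy hx (le_of_not_ge hxy)
  have hdiff : exp y - exp x = exp y * (1 - exp (x - y)) := by
    rw [mul_sub, mul_one, ← exp_add]; ring_nf
  have h1 : 1 - exp (x - y) ≤ y - x := by linarith [add_one_le_exp (x - y)]
  have h2 : 0 ≤ 1 - exp (x - y) := sub_nonneg.2 (exp_le_one_iff.2 (by linarith))
  rw [abs_sub_comm, abs_of_nonneg (by linarith [exp_le_exp.2 hxy]), abs_sub_comm,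
    abs_of_nonneg (by linarith), hdiff]
  exact (mul_le_mul (exp_le_one_iff.2 hy) h1 h2 zero_le_one).trans_eq (one_mul _)

section Morse

variable {ε : ℝ}

/-- `Morse ε x = morseProfile ε |x|`; unlike `Morse ε`, the profile is smooth on all of `ℝ`. -/
noncomputable def morseProfile (ε u : ℝ) : ℝ := 1 / (2 * ε) * exp (-u / ε)

theorem hasDerivAt_morseProfile (u : ℝ) :
    HasDerivAt (morseProfile ε) (-(1 / (2 * ε ^ 2)) * exp (-u / ε)) u := by
  have hlin : HasDerivAt (fun u : ℝ => -u / ε) (-1 / ε) u := by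
    simpa using (hasDerivAt_neg u).div_const ε
  refine (hlin.exp.const_mul (1 / (2 * ε))).congr_deriv ?_
  ring

theorem lipschitzOnWith_deriv_morseProfile (hε : 0 < ε) :
    LipschitzOnWith (1 / (2 * ε ^ 3)).toNNReal
      (fun u => -(1 / (2 * ε ^ 2)) * exp (-u / ε)) (Ici 0) := by
  refine LipschitzOnWith.of_dist_le_mul fun x hx y hy => ?_
  rw [Real.coe_toNNReal _ (by positivity), Real.dist_eq, Real.dist_eq, ← mul_sub, abs_mul,
    abs_neg, abs_of_pos (by positivity)]
  have hexp := abs_exp_sub_exp_le_of_nonpos (x := -x / ε) (y := -y / ε)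
    (div_nonpos_of_nonpos_of_nonneg (neg_nonpos.2 hx) hε.le)
    (div_nonpos_of_nonpos_of_nonneg (neg_nonpos.2 hy) hε.le)
  rw [← sub_div, neg_sub_neg, abs_div, abs_of_pos hε, abs_sub_comm y] at hexp
  calc 1 / (2 * ε ^ 2) * |exp (-x / ε) - exp (-y / ε)| ≤ 1 / (2 * ε ^ 2) * (|x - y| / ε) := by
        gcongr
    _ = 1 / (2 * ε ^ 3) * |x - y| := by field_simp

theorem abs_slope_morse_sub_le_of_nonneg (hε : 0 < ε) {a b a' b' : ℝ}
    (ha : 0 ≤ a) (hb : 0 ≤ b) (ha' : 0 ≤ a') (hb' : 0 ≤ b') (hab : a ≠ b) (hab' : a' ≠ b') :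
    |slope (Morse ε) a b - slope (Morse ε) a' b'| ≤ 1 / (2 * ε ^ 3) * (|a - a'| + |b - b'|) := by
  have hslope : ∀ {p q : ℝ}, 0 ≤ p → 0 ≤ q → slope (Morse ε) p q = slope (morseProfile ε) p q := by
    intro p q hp hq
    simp only [slope_def_field, Morse, morseProfile, abs_of_nonneg hp, abs_of_nonneg hq]
  rw [hslope ha hb, hslope ha' hb']
  have h := abs_slope_sub_slope_le (convex_Ici 0) (fun x _ => hasDerivAt_morseProfile x)
    (lipschitzOnWith_deriv_morseProfile hε) ha hb ha' hb' hab hab'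
  rwa [Real.coe_toNNReal _ (by positivity)] at h

theorem slope_morse_neg (a b : ℝ) : slope (Morse ε) (-a) (-b) = -slope (Morse ε) a b := by
  simp only [slope_def_field, Morse, abs_neg]
  rw [neg_sub_neg, ← neg_sub b a, div_neg]

theorem abs_slope_morse_sub_le (hε : 0 < ε) {a b a' b' : ℝ} (hab : a ≠ b) (hab' : a' ≠ b')
    (hside : (0 ≤ a ∧ 0 ≤ b ∧ 0 ≤ a' ∧ 0 ≤ b') ∨ (a ≤ 0 ∧ b ≤ 0 ∧ a' ≤ 0 ∧ b' ≤ 0)) :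
    |slope (Morse ε) a b - slope (Morse ε) a' b'| ≤ 1 / (2 * ε ^ 3) * (|a - a'| + |b - b'|) := by
  rcases hside with ⟨ha, hb, ha', hb'⟩ | ⟨ha, hb, ha', hb'⟩
  · exact abs_slope_morse_sub_le_of_nonneg hε ha hb ha' hb' hab hab'
  · have h := abs_slope_morse_sub_le_of_nonneg hε (neg_nonneg.2 ha) (neg_nonneg.2 hb)
      (neg_nonneg.2 ha') (neg_nonneg.2 hb') (neg_injective.ne hab) (neg_injective.ne hab')
    simpa only [slope_morse_neg, neg_sub_neg, abs_sub_comm a a', abs_sub_comm b b',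
      abs_sub_comm (slope (Morse ε) a b)] using h

end Morse

theorem particleRHS_eq_sum_slope (ε : ℝ) (N : ℕ) (u : ℕ → ℝ) (i : ℕ) :
    particleRHS ε N u i =
      1 / N * ∑ k ∈ Finset.range N, slope (Morse ε) (u k - u i) (u (k + 1) - u i) := by
  simp only [particleRHS, slope_def_field, sub_sub_sub_cancel_right]

theorem abs_particleRHS_sub_le {ε : ℝ} (hε : 0 < ε) {N : ℕ} {u v : ℕ → ℝ}
    (hu : ∀ k < N, u k < u (k + 1)) (hv : ∀ k < N, v k < v (k + 1)) {i : ℕ} (hi : i ≤ N) :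
    |particleRHS ε N u i - particleRHS ε N v i| ≤ 1 / (2 * ε ^ 3) * (1 / N *
      ∑ k ∈ Finset.range N,
        (|(u k - v k) - (u i - v i)| + |(u (k + 1) - v (k + 1)) - (u i - v i)|)) := by
  have hmono : ∀ {w : ℕ → ℝ}, (∀ k < N, w k < w (k + 1)) → MonotoneOn w (Iic N) :=
    fun hw => (strictMonoOn_Iic_of_lt_succ fun m hm => by simpa using hw m hm).monotoneOn
  rw [particleRHS_eq_sum_slope, particleRHS_eq_sum_slope, ← mul_sub, ← Finset.sum_sub_distrib,
    abs_mul, abs_of_nonneg (by positivity), mul_left_comm, Finset.mul_sum]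
  gcongr
  refine (Finset.abs_sum_le_sum_abs _ _).trans (Finset.sum_le_sum fun k hk => ?_)
  have hk : k < N := Finset.mem_range.1 hk
  -- Particles `k` and `k + 1` lie on the same side of particle `i`, in both configurations.
  have hside : (0 ≤ u k - u i ∧ 0 ≤ u (k + 1) - u i ∧ 0 ≤ v k - v i ∧ 0 ≤ v (k + 1) - v i) ∨
      (u k - u i ≤ 0 ∧ u (k + 1) - u i ≤ 0 ∧ v k - v i ≤ 0 ∧ v (k + 1) - v i ≤ 0) := by
    simp only [sub_nonneg, sub_nonpos]
    have hI : ∀ {j}, j ≤ N → j ∈ Iic N := id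
    rcases le_or_gt i k with hik | hki
    · exact Or.inl ⟨hmono hu (hI hi) (hI hk.le) hik, hmono hu (hI hi) (hI hk) (by omega),
        hmono hv (hI hi) (hI hk.le) hik, hmono hv (hI hi) (hI hk) (by omega)⟩
    · exact Or.inr ⟨hmono hu (hI hk.le) (hI hi) hki.le, hmono hu (hI hk) (hI hi) hki,
        hmono hv (hI hk.le) (hI hi) hki.le, hmono hv (hI hk) (hI hi) hki⟩
  have h := abs_slope_morse_sub_le hε (sub_lt_sub_right (hu k hk) (u i)).ne
    (sub_lt_sub_right (hv k hk) (v i)).ne hside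
  rwa [sub_sub_sub_comm, sub_sub_sub_comm (u (k + 1))] at h

theorem avg_abs_sub_le (N : ℕ) (e : ℕ → ℝ) (i : ℕ) :
    1 / N * ∑ k ∈ Finset.range N, (|e k - e i| + |e (k + 1) - e i|) ≤
      2 / N * ∑ j ∈ Finset.range (N + 1), |e j| + 2 * |e i| := by
  set S := ∑ j ∈ Finset.range (N + 1), |e j|
  have hS : ∑ k ∈ Finset.range N, |e k| ≤ S :=
    Finset.sum_le_sum_of_subset_of_nonneg (Finset.range_subset_range.2 N.le_succ)
      fun _ _ _ => abs_nonneg _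
  have hS' : ∑ k ∈ Finset.range N, |e (k + 1)| ≤ S := by
    have hsplit : S = ∑ k ∈ Finset.range N, |e (k + 1)| + |e 0| :=
      Finset.sum_range_succ' (fun j => |e j|) N
    linarith [abs_nonneg (e 0)]
  have hsum : ∑ k ∈ Finset.range N, (|e k - e i| + |e (k + 1) - e i|) ≤ 2 * S + N * (2 * |e i|) :=
    calc ∑ k ∈ Finset.range N, (|e k - e i| + |e (k + 1) - e i|)
        ≤ ∑ k ∈ Finset.range N, (|e k| + |e (k + 1)| + 2 * |e i|) :=
          Finset.sum_le_sum fun k _ => by linarith [abs_sub (e k) (e i), abs_sub (e (k + 1)) (e i)]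
      _ = ∑ k ∈ Finset.range N, |e k| + ∑ k ∈ Finset.range N, |e (k + 1)| + N * (2 * |e i|) := by
          rw [Finset.sum_add_distrib, Finset.sum_add_distrib, Finset.sum_const, Finset.card_range,
            nsmul_eq_mul]
      _ ≤ 2 * S + N * (2 * |e i|) := by linarith
  rcases N.eq_zero_or_pos with rfl | hN
  · simp
  calc 1 / N * ∑ k ∈ Finset.range N, (|e k - e i| + |e (k + 1) - e i|)
      ≤ 1 / N * (2 * S + N * (2 * |e i|)) := by gcongr
    _ = 2 / N * S + 2 * |e i| := by field_simp

theorem sum_abs_mul_avg_abs_sub_le {N : ℕ} (hN : 1 ≤ N) (e : ℕ → ℝ) :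
    ∑ i ∈ Finset.range (N + 1),
        |e i| * (1 / N * ∑ k ∈ Finset.range N, (|e k - e i| + |e (k + 1) - e i|)) ≤
      6 * ∑ i ∈ Finset.range (N + 1), e i ^ 2 := by
  set S := ∑ j ∈ Finset.range (N + 1), |e j|
  set V := ∑ i ∈ Finset.range (N + 1), e i ^ 2
  have hV : 0 ≤ V := Finset.sum_nonneg fun i _ => sq_nonneg (e i)
  have hN' : (1 : ℝ) ≤ N := by exact_mod_cast hN
  have hCS : S ^ 2 ≤ (N + 1) * V := by
    simpa [sq_abs] using sq_sum_le_card_mul_sum_sq (s := Finset.range (N + 1)) (f := fun j => |e j|)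
  have hterm : ∀ i, |e i| * (2 / N * S + 2 * |e i|) = 2 / N * S * |e i| + 2 * e i ^ 2 :=
    fun i => by rw [← sq_abs (e i)]; ring
  calc ∑ i ∈ Finset.range (N + 1),
        |e i| * (1 / N * ∑ k ∈ Finset.range N, (|e k - e i| + |e (k + 1) - e i|))
      ≤ ∑ i ∈ Finset.range (N + 1), |e i| * (2 / N * S + 2 * |e i|) :=
        Finset.sum_le_sum fun i _ =>
          mul_le_mul_of_nonneg_left (avg_abs_sub_le N e i) (abs_nonneg _)
    _ = 2 * S ^ 2 / N + 2 * V := by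
        rw [Finset.sum_congr rfl fun i _ => hterm i, Finset.sum_add_distrib, ← Finset.mul_sum,
          ← Finset.mul_sum]
        ring
    _ ≤ 6 * V := by
        have : 2 * S ^ 2 / N ≤ 4 * V := by
          rw [div_le_iff₀ (by positivity)]
          nlinarith [mul_le_mul_of_nonneg_right hN' hV]
        linarith

theorem sum_mul_particleRHS_sub_le {ε : ℝ} (hε : 0 < ε) {N : ℕ} (hN : 1 ≤ N) {u v : ℕ → ℝ}
    (hu : ∀ k < N, u k < u (k + 1)) (hv : ∀ k < N, v k < v (k + 1)) :
    ∑ i ∈ Finset.range (N + 1), 2 * (u i - v i) * (particleRHS ε N u i - particleRHS ε N v i) ≤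
      6 / ε ^ 3 * ∑ i ∈ Finset.range (N + 1), (u i - v i) ^ 2 := by
  set e : ℕ → ℝ := fun j => u j - v j
  calc ∑ i ∈ Finset.range (N + 1), 2 * e i * (particleRHS ε N u i - particleRHS ε N v i)
      ≤ ∑ i ∈ Finset.range (N + 1), 2 * |e i| * |particleRHS ε N u i - particleRHS ε N v i| :=
        Finset.sum_le_sum fun i _ => by
          rw [mul_assoc, mul_assoc]
          exact mul_le_mul_of_nonneg_left ((le_abs_self _).trans (abs_mul _ _).le) two_pos.le
    _ ≤ ∑ i ∈ Finset.range (N + 1), 2 * |e i| * (1 / (2 * ε ^ 3) *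
          (1 / N * ∑ k ∈ Finset.range N, (|e k - e i| + |e (k + 1) - e i|))) :=
        Finset.sum_le_sum fun i hi => by
          gcongr
          exact abs_particleRHS_sub_le hε hu hv (Nat.lt_succ_iff.1 (Finset.mem_range.1 hi))
    _ = 1 / ε ^ 3 * ∑ i ∈ Finset.range (N + 1),
          |e i| * (1 / N * ∑ k ∈ Finset.range N, (|e k - e i| + |e (k + 1) - e i|)) := by
        rw [Finset.mul_sum]
        refine Finset.sum_congr rfl fun i _ => ?_
        field_simp
    _ ≤ 1 / ε ^ 3 * (6 * ∑ i ∈ Finset.range (N + 1), e i ^ 2) := by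
        gcongr
        exact sum_abs_mul_avg_abs_sub_le hN e
    _ = 6 / ε ^ 3 * ∑ i ∈ Finset.range (N + 1), e i ^ 2 := by ring

theorem le_mul_exp_of_hasDerivWithinAt_le {V D : ℝ → ℝ} {C t : ℝ}
    (hV : ∀ s, 0 ≤ s → HasDerivWithinAt V (D s) (Ici 0) s) (hD : ∀ s, 0 ≤ s → D s ≤ C * V s)
    (ht : 0 ≤ t) : V t ≤ V 0 * exp (C * t) := by
  have h := le_gronwallBound_of_liminf_deriv_right_le (f' := D) (δ := V 0) (ε := 0)
    (fun s hs => (hV s hs.1).continuousWithinAt.mono Icc_subset_Ici_self)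
    (fun s hs _ hr => ((hV s hs.1).mono (Ici_subset_Ici.2 hs.1)).liminf_right_slope_le hr)
    le_rfl (fun s hs => by simpa using hD s hs.1) t ⟨ht, le_rfl⟩
  rwa [gronwallBound_ε0, sub_zero] at h

theorem sum_sq_sub_le_mul_exp {ε : ℝ} (hε : 0 < ε) {N : ℕ} (hN : 1 ≤ N) {x y : ℝ → ℕ → ℝ}
    (hx : IsParticleSol ε N x) (hy : IsParticleSol ε N y) {t : ℝ} (ht : 0 ≤ t) :
    ∑ i ∈ Finset.range (N + 1), (x t i - y t i) ^ 2 ≤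
      (∑ i ∈ Finset.range (N + 1), (x 0 i - y 0 i) ^ 2) * exp (6 / ε ^ 3 * t) := by
  refine le_mul_exp_of_hasDerivWithinAt_le
    (D := fun s => ∑ i ∈ Finset.range (N + 1),
      2 * (x s i - y s i) * (particleRHS ε N (x s) i - particleRHS ε N (y s) i))
    (fun s hs => ?_) (fun s hs => sum_mul_particleRHS_sub_le hε hN (hx.1 s hs) (hy.1 s hs)) ht
  refine HasDerivWithinAt.fun_sum fun i hi => ?_
  have hiN : i ≤ N := Nat.lt_succ_iff.1 (Finset.mem_range.1 hi)
  refine (((hx.2 i hiN s hs).sub (hy.2 i hiN s hs)).pow 2).congr_deriv ?_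
  simp only [Pi.sub_apply]
  push_cast
  ring

/-- stability. For every `ε > 0` there is a constant `C_ε > 0`,
depending only on `ε`, such that any two strictly ordered particle solutions satisfy
`‖x(t) - y(t)‖_N ≤ e^{C_ε t} ‖x(0) - y(0)‖_N` for all `t ≥ 0`. -/
theorem stmt5 (ε : ℝ) (hε : 0 < ε) :
    ∃ C : ℝ, 0 < C ∧ ∀ N : ℕ, 1 ≤ N → ∀ x y : ℝ → ℕ → ℝ,
      IsParticleSol ε N x → IsParticleSol ε N y → ∀ t : ℝ, 0 ≤ t →
        scaledNorm N (fun i => x t i - y t i) ≤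
          Real.exp (C * t) * scaledNorm N (fun i => x 0 i - y 0 i) := by
  refine ⟨3 / ε ^ 3, by positivity, fun N hN x y hx hy t ht => ?_⟩
  have hsq : exp (3 / ε ^ 3 * t) ^ 2 = exp (6 / ε ^ 3 * t) := by
    rw [← exp_nat_mul]
    ring_nf
  have h := mul_le_mul_of_nonneg_left (sum_sq_sub_le_mul_exp hε hN hx hy ht)
    (by positivity : (0 : ℝ) ≤ 1 / N)
  rw [scaledNorm, scaledNorm, ← sqrt_sq (exp_pos _).le, ← sqrt_mul (sq_nonneg _), hsq]
  exact sqrt_le_sqrt (by linarith)
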